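/- arXiv:2010.10060 — 3 statements merged into one kernel-verified Lean document; each statement's English description precedes it below -/
import Mathlib

section
/- The number of barred Callan sequences of size k × n equals the C-poly-Bernoulli number C_n^{(-k-1)}. -/
open Finset

/-- Stirling numbers of the second kind. -/
def stirling2 : ℕ → ℕ → ℕ
  | 0, 0 => 1
  | 0, _ + 1 => 0
  | _ + 1, 0 => 0
  | n + 1, j + 1 => (j + 1) * stirling2 n (j + 1) + stirling2 n j

/-- Genocchi numbers, via `G n = 2 (1 - 2^n) B n`. -/
def genocchi (n : ℕ) : ℚ := 2 * (1 - 2 ^ n) * bernoulli n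
/-- Blue base set for a `k × n` Callan sequence: `{1, …, k} ∪ {*}`. -/
abbrev Blue (k : ℕ) := Fin k ⊕ Unit

/-- Red base set for a `k × n` Callan sequence: `{1, …, n} ∪ {*}`. -/
abbrev Red (n : ℕ) := Fin n ⊕ Unit

/-- A Callan pair: a blue block together with a red block. -/
abbrev CPair (k n : ℕ) := Finset (Blue k) × Finset (Red n)

/-- A Callan sequence of size `k × n`: a sequence of Callan pairs whose blue (resp. red)
blocks form an ordered partition of the blue (resp. red) base set into nonempty blocks,
with both starred elements in the last (extra) pair. -/
structure CallanSeq (k n : ℕ) where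
  pairs : List (CPair k n)
  ne : pairs ≠ []
  blue_nonempty : ∀ p ∈ pairs, p.1.Nonempty
  red_nonempty : ∀ p ∈ pairs, p.2.Nonempty
  blue_partition : ∀ b : Blue k, ∃! i : Fin pairs.length, b ∈ (pairs.get i).1
  red_partition : ∀ r : Red n, ∃! i : Fin pairs.length, r ∈ (pairs.get i).2
  star_blue : (Sum.inr () : Blue k) ∈ (pairs.getLast ne).1
  star_red : (Sum.inr () : Red n) ∈ (pairs.getLast ne).2

/-- A barred Callan sequence: a Callan sequence with one bar inserted at any position
except the very end, i.e. immediately before one of the pairs. -/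
def BarredCallan (k n : ℕ) := Σ σ : CallanSeq k n, Fin σ.pairs.length
/-- `C`-poly-Bernoulli numbers with negative upper index: `cPolyBernoulli n k = C_n^{(-k-1)}`. -/
def cPolyBernoulli (n k : ℕ) : ℕ :=
  ∑ m ∈ Finset.range (min n k + 1),
    m.factorial * (m + 1).factorial * stirling2 (n + 1) (m + 1) * stirling2 (k + 1) (m + 1)


/-!
A Callan sequence with `m + 1` pairs is the same thing as two surjections
`Blue k → Fin (m + 1)` and `Red n → Fin (m + 1)` (the block index of each element) that both send
the star to the last index `m`; the bar adds a factor `m + 1`. Surjections `α → Fin (m + 1)` are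
counted by `(m + 1)! S(|α|, m + 1)`, by the recursion on `|α|` that asks whether the value of the
new point is hit again, and prescribing the value at the star divides this by `m + 1`, since
transpositions of values permute the fibres of `f ↦ f star`. Summing
`(m + 1) · m! S(k + 1, m + 1) · m! S(n + 1, m + 1)` over `m` gives `C_n^{(-k-1)}`.
-/

open Function Set

section Surjections

variable {α β : Type*}

theorem Set.insert_eq_univ_iff {v : β} {s : Set β} :
    insert v s = univ ↔ s = univ ∨ s = {v}ᶜ := by
  constructor
  · intro h
    by_cases hv : v ∈ s
    · exact .inl (by rwa [insert_eq_of_mem hv] at h)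
    · refine .inr (Set.ext fun y => ⟨fun hy hyv => hv (hyv ▸ hy), fun hy => ?_⟩)
      exact ((h ▸ mem_univ y : y ∈ insert v s)).resolve_left hy
  · rintro (rfl | rfl) <;> ext y <;> by_cases y = v <;> simp [*]

theorem Fin.surjective_cons_iff {N : ℕ} {v : β} {g : Fin N → β} :
    Surjective (Fin.cons v g : Fin (N + 1) → β) ↔ Surjective g ∨ Set.range g = {v}ᶜ := by
  simp only [← range_eq_univ, Fin.range_cons, insert_eq_univ_iff]

def rangeEqEquivSurjective (s : Set β) :
    {g : α → β // Set.range g = s} ≃ {g : α → s // Surjective g} where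
  toFun g := ⟨codRestrict g.1 s (fun x => g.2.subset (mem_range_self x)), fun ⟨y, hy⟩ => by
    obtain ⟨x, hx⟩ : y ∈ Set.range g.1 := g.2.symm.subset hy
    exact ⟨x, Subtype.ext hx⟩⟩
  invFun h := ⟨Subtype.val ∘ h.1, by
    rw [range_comp, h.2.range_eq, image_univ, Subtype.range_coe]⟩
  left_inv _ := rfl
  right_inv _ := rfl

noncomputable def surjectiveFinSuccEquiv (N : ℕ) (β : Type*) :
    {f : Fin (N + 1) → β // Surjective f} ≃
      Σ v : β, {g : Fin N → β // Surjective g} ⊕ {g : Fin N → β // Set.range g = {v}ᶜ} := by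
  classical
  exact ((Fin.consEquiv fun _ => β).symm.subtypeEquiv fun f => by
      rw [← Fin.cons_self_tail f, Fin.surjective_cons_iff]; rfl).trans <|
    (Equiv.subtypeProdEquivSigmaSubtype fun v g => Surjective g ∨ Set.range g = {v}ᶜ).trans <|
    Equiv.sigmaCongrRight fun v => subtypeOrEquiv _ _ (by
      simp only [Pi.disjoint_iff, Prop.disjoint_iff]
      intro g ⟨hg, hg'⟩
      simpa [hg.range_eq] using hg'.symm)

theorem card_surjective_fin (N : ℕ) (β : Type*) [Fintype β] :
    Nat.card {f : Fin N → β // Surjective f} =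
      (Fintype.card β).factorial * stirling2 N (Fintype.card β) := by
  induction N generalizing β with
  | zero =>
    rcases isEmpty_or_nonempty β with hβ | ⟨⟨b⟩⟩
    · have : Unique {f : Fin 0 → β // Surjective f} :=
        ⟨⟨⟨finZeroElim, isEmptyElim⟩⟩, fun f => Subtype.ext (funext finZeroElim)⟩
      simp [Fintype.card_eq_zero, stirling2]
    · have : IsEmpty {f : Fin 0 → β // Surjective f} := ⟨fun f => (f.2 b).choose.elim0⟩
      obtain ⟨c, hc⟩ := Nat.exists_eq_succ_of_ne_zero (Fintype.card_pos_iff.2 ⟨b⟩).ne'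
      simp [hc, stirling2]
  | succ N ih =>
    have card_range_eq_compl (v : β) : Nat.card {g : Fin N → β // Set.range g = {v}ᶜ} =
        (Fintype.card β - 1).factorial * stirling2 N (Fintype.card β - 1) := by
      classical
      rw [Nat.card_congr (rangeEqEquivSurjective _), ih, Fintype.card_compl_set,
        Set.card_singleton]
    rw [Nat.card_congr (surjectiveFinSuccEquiv N β), Nat.card_sigma]
    simp only [Nat.card_sum, ih, card_range_eq_compl, Finset.sum_const, Finset.card_univ,
      smul_eq_mul]
    rcases Fintype.card β with _ | c
    · simp [stirling2]
    · simp only [Nat.add_sub_cancel, Nat.factorial_succ, stirling2]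
      ring

theorem card_surjective (α β : Type*) [Fintype α] [Fintype β] :
    Nat.card {f : α → β // Surjective f} =
      (Fintype.card β).factorial * stirling2 (Fintype.card α) (Fintype.card β) := by
  rw [← card_surjective_fin]
  exact Nat.card_congr <| ((Fintype.equivFin α).arrowCongr (Equiv.refl β)).subtypeEquiv
    fun f => (Equiv.surjective_comp _ _).symm

theorem card_surjective_apply_eq_mul [Finite α] [Fintype β] (a : α) (b : β) :
    Nat.card {f : α → β // Surjective f ∧ f a = b} * Fintype.card β =
      Nat.card {f : α → β // Surjective f} := by
  classical
  have fiber_congr (b' : β) :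
      {f : α → β // Surjective f ∧ f a = b'} ≃ {f : α → β // Surjective f ∧ f a = b} :=
    ((Equiv.refl α).arrowCongr (Equiv.swap b' b)).subtypeEquiv fun f => by
      change _ ↔ Surjective (Equiv.swap b' b ∘ f) ∧ Equiv.swap b' b (f a) = b
      rw [Equiv.comp_surjective, Equiv.swap_apply_eq_iff, Equiv.swap_apply_right]
  let fibers :
      (Σ b' : β, {f : α → β // Surjective f ∧ f a = b'}) ≃ {f : α → β // Surjective f} :=
    { toFun := fun x => ⟨x.2.1, x.2.2.1⟩
      invFun := fun f => ⟨f.1 a, f.1, f.2, rfl⟩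
      left_inv := by rintro ⟨_, f, hf, rfl⟩; rfl
      right_inv := fun _ => rfl }
  rw [← Nat.card_congr fibers, Nat.card_sigma]
  simp [Nat.card_congr (fiber_congr _), mul_comm]

end Surjections

/-- An ordered partition of `α` into `L` nonempty blocks with `a` in the last block, encoded by
its block-index map. -/
abbrev PointedOrderedPartition (α : Type*) (a : α) (L : ℕ) : Type _ :=
  {f : α → Fin L // Surjective f ∧ (f a : ℕ) + 1 = L}

namespace PointedOrderedPartition

variable {α : Type*} {a : α}

theorem le_card [Fintype α] {L : ℕ} (f : PointedOrderedPartition α a L) :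
    L ≤ Fintype.card α :=
  (Fintype.card_fin L).symm.trans_le (Fintype.card_le_of_surjective _ f.2.1)

theorem card_eq [Fintype α] (a : α) (m : ℕ) :
    Nat.card (PointedOrderedPartition α a (m + 1)) =
      m.factorial * stirling2 (Fintype.card α) (m + 1) := by
  have h := card_surjective_apply_eq_mul a (Fin.last m)
  rw [card_surjective, Fintype.card_fin, Nat.factorial_succ, mul_comm, mul_assoc] at h
  rw [← Nat.eq_of_mul_eq_mul_left m.succ_pos h]
  exact Nat.card_congr <| Equiv.subtypeEquivRight fun f => by simp [Fin.ext_iff]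

end PointedOrderedPartition

section BlockIndex

variable {α γ : Type*} {l : List γ} {block : γ → Finset α}

noncomputable def blockIndex (h : ∀ x, ∃! i : Fin l.length, x ∈ block l[i]) (x : α) :
    Fin l.length :=
  (h x).exists.choose

variable (h : ∀ x, ∃! i : Fin l.length, x ∈ block l[i])

theorem blockIndex_eq_iff {x : α} {i : Fin l.length} : blockIndex h x = i ↔ x ∈ block l[i] :=
  ⟨fun e => e ▸ (h x).exists.choose_spec, (h x).unique (h x).exists.choose_spec⟩

theorem mem_block_iff_blockIndex {x : α} {i : ℕ} (hi : i < l.length) :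
    x ∈ block l[i] ↔ (blockIndex h x : ℕ) = i :=
  (blockIndex_eq_iff h (i := ⟨i, hi⟩)).symm.trans Fin.ext_iff

theorem blockIndex_surjective (hne : ∀ c ∈ l, (block c).Nonempty) :
    Surjective (blockIndex h) :=
  fun i => (hne _ (l.getElem_mem i.2)).imp fun _ hx => (blockIndex_eq_iff h).2 hx

theorem blockIndex_add_one_of_mem_getLast (hl : l ≠ []) {x : α}
    (hx : x ∈ block (l.getLast hl)) : (blockIndex h x : ℕ) + 1 = l.length := by
  have hlen := List.length_pos_iff.2 hl
  rw [List.getLast_eq_getElem, mem_block_iff_blockIndex h] at hx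
  omega

end BlockIndex

section FiberBlocks

variable {α γ : Type*} {L : ℕ} {l : List γ} {block : γ → Finset α} {f : α → Fin L}

theorem existsUnique_mem_block_of_fibers (hlen : l.length = L)
    (hmem : ∀ x i (hi : i < l.length), x ∈ block l[i] ↔ (f x : ℕ) = i) (x : α) :
    ∃! i : Fin l.length, x ∈ block l[i] :=
  ⟨⟨f x, hlen ▸ (f x).2⟩, (hmem _ _ _).2 rfl, fun _ hi => Fin.ext ((hmem _ _ _).1 hi).symm⟩

theorem block_nonempty_of_fibers (hlen : l.length = L)
    (hmem : ∀ x i (hi : i < l.length), x ∈ block l[i] ↔ (f x : ℕ) = i)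
    (hf : Surjective f) (c : γ) (hc : c ∈ l) : (block c).Nonempty := by
  obtain ⟨i, hi, rfl⟩ := List.getElem_of_mem hc
  obtain ⟨x, hx⟩ := hf ⟨i, hlen ▸ hi⟩
  exact ⟨x, (hmem _ _ _).2 (by rw [hx])⟩

theorem mem_block_getLast_of_fibers (hlen : l.length = L)
    (hmem : ∀ x i (hi : i < l.length), x ∈ block l[i] ↔ (f x : ℕ) = i)
    (hl : l ≠ []) {x : α} (hx : (f x : ℕ) + 1 = L) : x ∈ block (l.getLast hl) := by
  rw [List.getLast_eq_getElem, hmem]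
  omega

theorem eq_of_fibers {f' : α → Fin L} (hlen : l.length = L)
    (hmem : ∀ x i (hi : i < l.length), x ∈ block l[i] ↔ (f x : ℕ) = i)
    (hmem' : ∀ x i (hi : i < l.length), x ∈ block l[i] ↔ (f' x : ℕ) = i) : f = f' :=
  funext fun x => Fin.ext ((hmem' x (f x) (hlen ▸ (f x).2)).1 ((hmem _ _ _).2 rfl)).symm

end FiberBlocks

namespace CallanSeq

variable {k n : ℕ}

theorem ext_pairs {σ τ : CallanSeq k n} (h : σ.pairs = τ.pairs) : σ = τ := by
  cases σ; cases τ; subst h; rfl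

abbrev Blocks (k n L : ℕ) : Type :=
  PointedOrderedPartition (Blue k) (.inr ()) L × PointedOrderedPartition (Red n) (.inr ()) L

noncomputable def blocks (σ : CallanSeq k n) : Blocks k n σ.pairs.length :=
  (⟨blockIndex σ.blue_partition, blockIndex_surjective _ σ.blue_nonempty,
    blockIndex_add_one_of_mem_getLast _ σ.ne σ.star_blue⟩,
   ⟨blockIndex σ.red_partition, blockIndex_surjective _ σ.red_nonempty,
    blockIndex_add_one_of_mem_getLast _ σ.ne σ.star_red⟩)

section OfBlocks

variable {L : ℕ}

def blockPairs (f : Blue k → Fin L) (g : Red n → Fin L) : List (CPair k n) :=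
  List.ofFn fun i => (univ.filter (f · = i), univ.filter (g · = i))

variable (f : Blue k → Fin L) (g : Red n → Fin L)

theorem length_blockPairs : (blockPairs f g).length = L :=
  List.length_ofFn

theorem mem_blockPairs_fst (b : Blue k) (i : ℕ) (hi : i < (blockPairs f g).length) :
    b ∈ ((blockPairs f g)[i]).1 ↔ (f b : ℕ) = i := by
  simp [blockPairs, Fin.ext_iff]

theorem mem_blockPairs_snd (r : Red n) (i : ℕ) (hi : i < (blockPairs f g).length) :
    r ∈ ((blockPairs f g)[i]).2 ↔ (g r : ℕ) = i := by
  simp [blockPairs, Fin.ext_iff]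

def ofBlocks (x : Blocks k n L) : CallanSeq k n where
  pairs := blockPairs x.1.1 x.2.1
  ne := by
    rw [← List.length_pos_iff, length_blockPairs]
    exact Nat.lt_of_lt_of_eq (Nat.succ_pos _) x.1.2.2
  blue_nonempty :=
    block_nonempty_of_fibers (length_blockPairs _ _) (mem_blockPairs_fst _ _) x.1.2.1
  red_nonempty :=
    block_nonempty_of_fibers (length_blockPairs _ _) (mem_blockPairs_snd _ _) x.2.2.1
  blue_partition :=
    existsUnique_mem_block_of_fibers (length_blockPairs _ _) (mem_blockPairs_fst _ _)
  red_partition :=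
    existsUnique_mem_block_of_fibers (length_blockPairs _ _) (mem_blockPairs_snd _ _)
  star_blue :=
    mem_block_getLast_of_fibers (length_blockPairs _ _) (mem_blockPairs_fst _ _) _ x.1.2.2
  star_red :=
    mem_block_getLast_of_fibers (length_blockPairs _ _) (mem_blockPairs_snd _ _) _ x.2.2.2

end OfBlocks

theorem ofBlocks_blocks (σ : CallanSeq k n) : ofBlocks σ.blocks = σ := by
  refine ext_pairs (List.ext_getElem (length_blockPairs _ _) fun i h₁ h₂ => Prod.ext ?_ ?_)
  · ext b
    exact (mem_blockPairs_fst _ _ b i h₁).trans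
      (mem_block_iff_blockIndex σ.blue_partition h₂).symm
  · ext r
    exact (mem_blockPairs_snd _ _ r i h₁).trans
      (mem_block_iff_blockIndex σ.red_partition h₂).symm

theorem ofBlocks_injective_sigma :
    Injective fun x : Σ L : Fin (min n k + 2), Blocks k n L => ofBlocks x.2 := by
  rintro ⟨⟨L, hL⟩, f, g⟩ ⟨⟨L', hL'⟩, f', g'⟩ h
  have hpairs : blockPairs f.1 g.1 = blockPairs f'.1 g'.1 := congrArg pairs h
  obtain rfl : L = L' := by
    simpa only [length_blockPairs] using congrArg List.length hpairs
  have hmem_fst := mem_blockPairs_fst f'.1 g'.1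
  have hmem_snd := mem_blockPairs_snd f'.1 g'.1
  rw [← hpairs] at hmem_fst hmem_snd
  obtain rfl : f = f' := Subtype.ext <|
    eq_of_fibers (length_blockPairs _ _) (mem_blockPairs_fst _ _) hmem_fst
  obtain rfl : g = g' := Subtype.ext <|
    eq_of_fibers (length_blockPairs _ _) (mem_blockPairs_snd _ _) hmem_snd
  rfl

theorem length_lt (σ : CallanSeq k n) : σ.pairs.length < min n k + 2 := by
  have := σ.blocks.1.le_card
  have := σ.blocks.2.le_card
  simp only [Fintype.card_sum, Fintype.card_fin, Fintype.card_unit] at *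
  omega

noncomputable def equivBlocks : (Σ L : Fin (min n k + 2), Blocks k n L) ≃ CallanSeq k n :=
  Equiv.ofBijective _
    ⟨ofBlocks_injective_sigma, fun σ => ⟨⟨⟨_, σ.length_lt⟩, σ.blocks⟩, ofBlocks_blocks σ⟩⟩

end CallanSeq

theorem card_barredCallan_eq_sum (k n : ℕ) :
    Nat.card (BarredCallan k n) =
      ∑ L ∈ range (min n k + 2), Nat.card (CallanSeq.Blocks k n L) * L := by
  let e : BarredCallan k n ≃ Σ L : Fin (min n k + 2), CallanSeq.Blocks k n L × Fin L :=
    (Equiv.sigmaCongrLeft CallanSeq.equivBlocks).symm.trans <|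
      (Equiv.sigmaCongrRight fun _ => finCongr (CallanSeq.length_blockPairs _ _)).trans <|
      (Equiv.sigmaAssoc fun (L : Fin _) (_ : CallanSeq.Blocks k n L) => Fin L).trans <|
      Equiv.sigmaCongrRight fun _ => Equiv.sigmaEquivProd _ _
  rw [Nat.card_congr e, Nat.card_sigma, ← Fin.sum_univ_eq_sum_range]
  simp only [Nat.card_prod, Nat.card_fin]

/-- The number of barred Callan sequences of size `k × n` equals `C_n^{(-k-1)}`. -/
theorem card_barredCallan (k n : ℕ) :
    Nat.card (BarredCallan k n) = cPolyBernoulli n k := by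
  rw [card_barredCallan_eq_sum, sum_range_succ', cPolyBernoulli]
  simp only [Nat.card_prod, PointedOrderedPartition.card_eq, Fintype.card_sum, Fintype.card_fin,
    Fintype.card_unit, mul_zero, add_zero]
  refine sum_congr rfl fun m _ => ?_
  rw [Nat.factorial_succ]
  ring
end

section
/- For all n, k, m ≥ 0, the cardinality of the set of m-barred Callan sequences of size k × n equals the cardinality of the set of m-barred Callan sequences of size n × k, i.e., C_n^k(m) = C_k^n(m). -/
/-- A labelled bar: a blue bar with label in `{1, …, m}` (encoded by `Fin m`) or
a red bar with label in `{0, …, m}` (encoded by `Fin (m+1)`). -/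
abbrev MBar (m : ℕ) := Fin m ⊕ Fin (m + 1)

/-- The numerical label of a bar: blue bar `j : Fin m` has label `j + 1`,
red bar `j : Fin (m+1)` has label `j`. -/
def barLabel {m : ℕ} : MBar m → ℕ := Sum.elim (fun j => (j : ℕ) + 1) (fun j => (j : ℕ))

/-- An element of an `m`-barred Callan sequence: a labelled bar or a Callan pair. -/
abbrev MElem (k n m : ℕ) := MBar m ⊕ CPair k n

/-- An `m`-barred Callan sequence of size `k × n`: a sequence consisting of the `m` labelled
blue bars, the `m+1` labelled red bars (each appearing exactly once) and the Callan pairs of a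
`k × n` Callan sequence, such that each blue bar with label `i` is immediately followed by a
bar with label strictly smaller than `i`, and each red bar with label `i` is immediately
followed either by a Callan pair or by a bar with label strictly greater than `i`. -/
structure MBarred (k n m : ℕ) where
  word : List (MElem k n m)
  bars_unique : ∀ b : MBar m, ∃! i : Fin word.length, word.get i = Sum.inl b
  pairs_ne : word.filterMap Sum.getRight? ≠ []
  blue_nonempty : ∀ p ∈ word.filterMap Sum.getRight?, p.1.Nonempty
  red_nonempty : ∀ p ∈ word.filterMap Sum.getRight?, p.2.Nonempty
  blue_partition : ∀ b : Blue k, ∃! i : Fin (word.filterMap Sum.getRight?).length,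
      b ∈ ((word.filterMap Sum.getRight?).get i).1
  red_partition : ∀ r : Red n, ∃! i : Fin (word.filterMap Sum.getRight?).length,
      r ∈ ((word.filterMap Sum.getRight?).get i).2
  star_blue : (Sum.inr () : Blue k) ∈ ((word.filterMap Sum.getRight?).getLast pairs_ne).1
  star_red : (Sum.inr () : Red n) ∈ ((word.filterMap Sum.getRight?).getLast pairs_ne).2
  blue_bar_rule : ∀ (i : ℕ) (b : Fin m), word[i]? = some (Sum.inl (Sum.inl b)) →
      ∃ b' : MBar m, word[i+1]? = some (Sum.inl b') ∧ barLabel b' < (b : ℕ) + 1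
  red_bar_rule : ∀ (i : ℕ) (r : Fin (m + 1)), word[i]? = some (Sum.inl (Sum.inr r)) →
      (∃ p : CPair k n, word[i+1]? = some (Sum.inr p)) ∨
      (∃ b' : MBar m, word[i+1]? = some (Sum.inl b') ∧ (r : ℕ) < barLabel b')

/-!
The bar conditions never look inside the Callan pairs, so swapping the blue and red block of
every pair is an involution exchanging `m`-barred Callan sequences of size `k × n` and `n × k`.
-/

namespace List

variable {α β γ δ : Type*}

theorem filterMap_getRight?_map_sumMap (f : α → γ) (g : β → δ) (l : List (α ⊕ β)) :
    (l.map (Sum.map f g)).filterMap Sum.getRight? = (l.filterMap Sum.getRight?).map g := by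
  induction l with
  | nil => rfl
  | cons x l ih => cases x <;> simp [filterMap_cons, ih]

theorem existsUnique_fin_map_iff (g : α → β) (P : β → Prop) (l : List α) :
    (∃! i : Fin (l.map g).length, P ((l.map g).get i)) ↔ ∃! i : Fin l.length, P (g (l.get i)) :=
  (finCongr (length_map g)).existsUnique_congr (by simp)

end List

namespace MElem

variable {k n m : ℕ}

def swap : MElem k n m → MElem n k m := Sum.map id Prod.swap

theorem swap_swap (x : MElem k n m) : x.swap.swap = x := by
  cases x <;> rfl

theorem swap_eq_inl_iff {x : MElem k n m} {b : MBar m} : x.swap = Sum.inl b ↔ x = Sum.inl b := by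
  cases x <;> simp [swap]

theorem getElem?_map_swap_eq_some_inl_iff (w : List (MElem k n m)) (i : ℕ) (b : MBar m) :
    (w.map swap)[i]? = some (Sum.inl b) ↔ w[i]? = some (Sum.inl b) := by
  simp [List.getElem?_map, swap_eq_inl_iff]

theorem filterMap_getRight?_map_swap (w : List (MElem k n m)) :
    (w.map swap).filterMap Sum.getRight? = (w.filterMap Sum.getRight?).map Prod.swap :=
  List.filterMap_getRight?_map_sumMap _ _ w

theorem getLast_filterMap_getRight?_map_swap (w : List (MElem k n m))
    (h : (w.map swap).filterMap Sum.getRight? ≠ []) (h' : w.filterMap Sum.getRight? ≠ []) :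
    ((w.map swap).filterMap Sum.getRight?).getLast h =
      ((w.filterMap Sum.getRight?).getLast h').swap := by
  rw [List.getLast_congr h _ (filterMap_getRight?_map_swap w), List.getLast_map]
  exact List.map_eq_nil_iff.not.2 h'

end MElem

namespace MBarred

open MElem

variable {k n m : ℕ}

def swap (σ : MBarred k n m) : MBarred n k m where
  word := σ.word.map MElem.swap
  bars_unique b := (List.existsUnique_fin_map_iff _ (· = Sum.inl b) _).2 <| by
    simpa only [swap_eq_inl_iff] using σ.bars_unique b
  pairs_ne := by
    rw [filterMap_getRight?_map_swap]
    exact List.map_eq_nil_iff.not.2 σ.pairs_ne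
  blue_nonempty p hp := by
    simp only [filterMap_getRight?_map_swap, List.mem_map] at hp
    obtain ⟨q, hq, rfl⟩ := hp
    exact σ.red_nonempty q hq
  red_nonempty p hp := by
    simp only [filterMap_getRight?_map_swap, List.mem_map] at hp
    obtain ⟨q, hq, rfl⟩ := hp
    exact σ.blue_nonempty q hq
  blue_partition b := by
    rw [filterMap_getRight?_map_swap]
    exact (List.existsUnique_fin_map_iff _ (fun p : CPair n k => b ∈ p.1) _).2
      (σ.red_partition b)
  red_partition r := by
    rw [filterMap_getRight?_map_swap]
    exact (List.existsUnique_fin_map_iff _ (fun p : CPair n k => r ∈ p.2) _).2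
      (σ.blue_partition r)
  star_blue := by
    rw [getLast_filterMap_getRight?_map_swap _ _ σ.pairs_ne]
    exact σ.star_red
  star_red := by
    rw [getLast_filterMap_getRight?_map_swap _ _ σ.pairs_ne]
    exact σ.star_blue
  blue_bar_rule i b hb := by
    obtain ⟨b', hb', hlt⟩ :=
      σ.blue_bar_rule i b ((getElem?_map_swap_eq_some_inl_iff _ _ _).1 hb)
    exact ⟨b', (getElem?_map_swap_eq_some_inl_iff _ _ _).2 hb', hlt⟩
  red_bar_rule i r hr := by
    rcases σ.red_bar_rule i r ((getElem?_map_swap_eq_some_inl_iff _ _ _).1 hr) with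
      ⟨p, hp⟩ | ⟨b', hb', hlt⟩
    · exact Or.inl ⟨p.swap, by simp [List.getElem?_map, hp, MElem.swap]⟩
    · exact Or.inr ⟨b', (getElem?_map_swap_eq_some_inl_iff _ _ _).2 hb', hlt⟩

theorem swap_swap (σ : MBarred k n m) : σ.swap.swap = σ := by
  obtain ⟨w, _⟩ := σ
  simp [swap, List.map_map, Function.comp_def, MElem.swap_swap]

def swapEquiv (k n m : ℕ) : MBarred k n m ≃ MBarred n k m where
  toFun := swap
  invFun := swap
  left_inv := swap_swap
  right_inv := swap_swap

end MBarred

/-- `C_n^k(m) = C_k^n(m)`: the number of `m`-barred Callan sequences of size `k × n`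
equals the number of `m`-barred Callan sequences of size `n × k`. -/
theorem mBarred_symm (n k m : ℕ) :
    Nat.card (MBarred k n m) = Nat.card (MBarred n k m) :=
  Nat.card_congr (MBarred.swapEquiv k n m)
end

section
/- For all n, k ≥ 0, the number of 0-barred Callan sequences of size k × n equals the number of barred Callan sequences of size k × n, i.e., C_n^k(0) = C_n^k. -/
namespace List

variable {α β : Type*}

theorem existsUnique_get_eq_iff {l : List α} {a : α} :
    (∃! i : Fin l.length, l.get i = a) ↔ ∃ j : ℕ, ∀ i : ℕ, l[i]? = some a ↔ i = j := by
  constructor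
  · rintro ⟨j, hj, huniq⟩
    refine ⟨j, fun i => ⟨fun hi => ?_, fun hij => by simp [hij, ← hj]⟩⟩
    obtain ⟨hlt, rfl⟩ := getElem?_eq_some_iff.mp hi
    exact congrArg Fin.val (huniq ⟨i, hlt⟩ rfl)
  · rintro ⟨j, hj⟩
    obtain ⟨hlt, hget⟩ := getElem?_eq_some_iff.mp ((hj j).2 rfl)
    refine ⟨⟨j, hlt⟩, hget, fun i hi => Fin.ext ((hj i).1 ?_)⟩
    simp [← hi]

theorem filterMap_getRight?_map_inr (l : List α) :
    (l.map (Sum.inr : α → β ⊕ α)).filterMap Sum.getRight? = l := by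
  simp [filterMap_map, Function.comp_def]

theorem exists_eq_map_inr_of_forall_isRight {l : List (β ⊕ α)} (h : ∀ x ∈ l, x.isRight) :
    ∃ L : List α, l = L.map Sum.inr := by
  induction l with
  | nil => exact ⟨[], rfl⟩
  | cons x t ih =>
    obtain ⟨L, rfl⟩ := ih fun y hy => h y (mem_cons_of_mem x hy)
    obtain ⟨a, rfl⟩ := Sum.isRight_iff.mp (h x mem_cons_self)
    exact ⟨a :: L, rfl⟩

theorem filterMap_getRight?_insertIdx_inl (l : List α) (j : ℕ) (b : β) :
    ((l.map Sum.inr).insertIdx j (Sum.inl b)).filterMap Sum.getRight? = l := by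
  induction j generalizing l with
  | zero => exact filterMap_getRight?_map_inr l
  | succ j ih => cases l <;> simp [ih]

theorem getElem?_insertIdx_inl_eq_inl_iff {l : List α} {j : ℕ} (hj : j ≤ l.length)
    {b c : β} {i : ℕ} :
    ((l.map Sum.inr).insertIdx j (Sum.inl b))[i]? = some (Sum.inl c) ↔ i = j ∧ c = b := by
  rw [getElem?_insertIdx]
  split_ifs with hlt heq hle
  · simp [hlt.ne]
  · simp [heq, eq_comm]
  · simp at hle; omega
  · simp [heq]

theorem exists_eq_insertIdx_inl {w : List (β ⊕ α)} {j : ℕ} {b : β}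
    (hj : w[j]? = some (Sum.inl b)) (h : ∀ i x, w[i]? = some (Sum.inl x) → i = j) :
    ∃ L : List α, w = (L.map Sum.inr).insertIdx j (Sum.inl b) := by
  obtain ⟨hlt, hwj⟩ := getElem?_eq_some_iff.mp hj
  have hright : ∀ x ∈ w.eraseIdx j, x.isRight := by
    intro x hx
    obtain ⟨i, hij, hi⟩ := mem_eraseIdx_iff_getElem?.mp hx
    rcases x with y | y
    · exact absurd (h i y hi) hij
    · rfl
  obtain ⟨L, hL⟩ := exists_eq_map_inr_of_forall_isRight hright
  refine ⟨L, ?_⟩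
  rw [← hL, ← hwj, insertIdx_eraseIdx_getElem]

end List

theorem MBar.eq_red_zero (b : MBar 0) : b = Sum.inr 0 := by
  rcases b with b | b
  · exact b.elim0
  · rw [Fin.fin_one_eq_zero b]

section

variable {k n m : ℕ}

theorem CallanSeq.ext {σ τ : CallanSeq k n} (h : σ.pairs = τ.pairs) : σ = τ := by
  cases σ; cases τ; cases h; rfl

theorem MBarred.ext {v w : MBarred k n m} (h : v.word = w.word) : v = w := by
  cases v; cases w; cases h; rfl

def MBarred.toCallanSeq (w : MBarred k n m) : CallanSeq k n where
  pairs := w.word.filterMap Sum.getRight?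
  ne := w.pairs_ne
  blue_nonempty := w.blue_nonempty
  red_nonempty := w.red_nonempty
  blue_partition := w.blue_partition
  red_partition := w.red_partition
  star_blue := w.star_blue
  star_red := w.star_red

def BarredCallan.toMBarred (x : BarredCallan k n) : MBarred k n 0 :=
  have hpairs := List.filterMap_getRight?_insertIdx_inl x.1.pairs x.2 (Sum.inr 0 : MBar 0)
  have hbar (i : ℕ) (c : MBar 0) := List.getElem?_insertIdx_inl_eq_inl_iff (l := x.1.pairs)
    (b := (Sum.inr 0 : MBar 0)) (c := c) (i := i) x.2.isLt.le
  { word := (x.1.pairs.map Sum.inr).insertIdx x.2 (Sum.inl (Sum.inr 0))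
    bars_unique := fun b => by
      rw [MBar.eq_red_zero b, List.existsUnique_get_eq_iff]
      exact ⟨x.2, fun i => by simp [hbar]⟩
    pairs_ne := by rw [hpairs]; exact x.1.ne
    blue_nonempty := by rw [hpairs]; exact x.1.blue_nonempty
    red_nonempty := by rw [hpairs]; exact x.1.red_nonempty
    blue_partition := by rw [hpairs]; exact x.1.blue_partition
    red_partition := by rw [hpairs]; exact x.1.red_partition
    star_blue := by simp only [hpairs]; exact x.1.star_blue
    star_red := by simp only [hpairs]; exact x.1.star_red
    blue_bar_rule := fun _ b => b.elim0
    red_bar_rule := fun i r hi => by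
      obtain rfl : i = x.2 := ((hbar i _).mp hi).1
      left
      exact ⟨x.1.pairs[x.2], by simp [List.getElem?_insertIdx]⟩ }

theorem BarredCallan.toMBarred_injective :
    Function.Injective (BarredCallan.toMBarred (k := k) (n := n)) := by
  rintro ⟨σ, j⟩ ⟨τ, j'⟩ h
  have hword : (σ.pairs.map Sum.inr).insertIdx j (Sum.inl (Sum.inr 0 : MBar 0)) =
      (τ.pairs.map Sum.inr).insertIdx j' (Sum.inl (Sum.inr 0)) := congrArg MBarred.word h
  obtain rfl : σ = τ := CallanSeq.ext <| by
    rw [← List.filterMap_getRight?_insertIdx_inl σ.pairs j (Sum.inr 0 : MBar 0),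
      ← List.filterMap_getRight?_insertIdx_inl τ.pairs j' (Sum.inr 0 : MBar 0)]
    exact congrArg _ hword
  have hj : ((σ.pairs.map Sum.inr).insertIdx j' (Sum.inl (Sum.inr 0 : MBar 0)))[(j : ℕ)]? =
      some (Sum.inl (Sum.inr 0)) := by
    rw [← hword, List.getElem?_insertIdx_inl_eq_inl_iff j.isLt.le]
    exact ⟨rfl, rfl⟩
  rw [Fin.ext ((List.getElem?_insertIdx_inl_eq_inl_iff j'.isLt.le).mp hj).1]

theorem BarredCallan.toMBarred_surjective :
    Function.Surjective (BarredCallan.toMBarred (k := k) (n := n)) := by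
  intro w
  obtain ⟨j, hj⟩ := List.existsUnique_get_eq_iff.mp (w.bars_unique (Sum.inr 0))
  have hbar : ∀ i b, w.word[i]? = some (Sum.inl b) → i = j := fun i b hi =>
    (hj i).mp (MBar.eq_red_zero b ▸ hi)
  obtain ⟨L, hw⟩ := List.exists_eq_insertIdx_inl ((hj j).mpr rfl) hbar
  have hL : w.toCallanSeq.pairs = L := by
    simp only [MBarred.toCallanSeq, hw, List.filterMap_getRight?_insertIdx_inl]
  -- the red bar is followed by a pair, so it does not stand at the end
  obtain ⟨p, hp⟩ : ∃ p, w.word[j + 1]? = some (Sum.inr p) := by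
    refine (w.red_bar_rule j 0 ((hj j).mpr rfl)).resolve_right ?_
    rintro ⟨b, hb, -⟩
    exact absurd (hbar _ b hb) (Nat.succ_ne_self j)
  have hjL : j < w.toCallanSeq.pairs.length := by
    have := (List.getElem?_eq_some_iff.mp hp).1
    rw [hw, List.length_insertIdx, List.length_map] at this
    rw [hL]
    split_ifs at this <;> omega
  refine ⟨⟨w.toCallanSeq, ⟨j, hjL⟩⟩, MBarred.ext ?_⟩
  simp only [BarredCallan.toMBarred, hL, hw]

end

/-- `C_n^k(0) = C_n^k`: the number of `0`-barred Callan sequences of size `k × n` equals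
the number of barred Callan sequences of size `k × n`. -/
theorem mBarred_zero (n k : ℕ) :
    Nat.card (MBarred k n 0) = Nat.card (BarredCallan k n) :=
  (Nat.card_eq_of_bijective _
    ⟨BarredCallan.toMBarred_injective, BarredCallan.toMBarred_surjective⟩).symm
end
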